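/- arXiv:1801.00534 — 2 statements merged into one kernel-verified Lean document; each statement's English description precedes it below -/
import Mathlib

section
/- Let f be a polynomial of degree d over ℂ with d distinct roots p₁,…,p_d, and let h be a polynomial with deg h ≤ d−2. If h vanishes at all but one of the roots of f, then h vanishes at all roots of f. -/
open Polynomial

/-- One-variable Cayley–Bacharach: if `f` has degree `d` with `d` distinct
(simple) roots, `deg h ≤ d - 2`, and `h` vanishes at all roots of `f` except
possibly one, then `h` vanishes at all roots of `f`. -/
theorem cayley_bacharach_one_var (f h : Polynomial ℂ) (d : ℕ)
    (hdeg : f.natDegree = d) (hf : f ≠ 0)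
    (hsimple : f.roots.toFinset.card = d)
    (hh : h.degree + 2 ≤ (d : WithBot ℕ))
    (p₀ : ℂ) (hp₀ : p₀ ∈ f.roots.toFinset)
    (hvan : ∀ p ∈ f.roots.toFinset, p ≠ p₀ → h.eval p = 0) :
    ∀ p ∈ f.roots.toFinset, h.eval p = 0 := by
  suffices h0 : h = 0 by intro p hp; simp [h0]
  by_contra hne
  have hdegnat : (h.natDegree : WithBot ℕ) + 2 ≤ (d : WithBot ℕ) := by
    rwa [degree_eq_natDegree hne] at hh
  have hcast : h.natDegree + 2 ≤ d := by exact_mod_cast hdegnat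
  have hd2 : 2 ≤ d := le_trans (by omega) hcast
  have hcard : (f.roots.toFinset.erase p₀).card = d - 1 := by
    rw [Finset.card_erase_of_mem hp₀, hsimple]
  apply hne
  apply Polynomial.eq_zero_of_natDegree_lt_card_of_eval_eq_zero' h
    (f.roots.toFinset.erase p₀)
  · intro i hi
    exact hvan i (Finset.mem_of_mem_erase hi) (Finset.ne_of_mem_erase hi)
  · rw [hcard]; omega
end

section
/- Let A be a commutative ring, V a free A-module of rank n with basis e₁,…,eₙ, and s = ∑ sᵢeᵢ ∈ V. The Koszul complex Λ^• V* with differential ι_s is exact if the ideal (s₁,…,sₙ) equals A, i.e. if s generates the unit ideal componentwise. -/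
/-!
Since the `cᵢ` generate the unit ideal, some linear form `τ = ∑ tᵢ eᵢ*` satisfies `τ s = 1`.
Wedging with `τ` is then a contracting homotopy: by the Leibniz rule
`ι_s (τ ∧ f) = τ(s) f - τ ∧ ι_s f`, every `f` with `ι_s f = 0` equals `ι_s (τ ∧ f)`, and `a • τ`
is a preimage of `a` under the last map. Here `τ ∧ f` is `alternatizeUncurryFin (τ.smulRight f)`.
-/

open AlternatingMap Fin

theorem Fin.removeNth_succ_vecCons {α : Type*} {n : ℕ} (i : Fin (n + 1)) (x : α)
    (v : Fin (n + 1) → α) :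
    removeNth i.succ (Matrix.vecCons x v) = Matrix.vecCons x (removeNth i v) := by
  ext j
  cases j using Fin.cases <;> simp [removeNth_apply]

theorem AlternatingMap.curryLeft_alternatizeUncurryFin_smulRight
    {R M N : Type*} [CommRing R] [AddCommGroup M] [Module R M] [AddCommGroup N] [Module R N]
    {k : ℕ} (τ : M →ₗ[R] R) (f : M [⋀^Fin (k + 1)]→ₗ[R] N) (x : M) :
    (alternatizeUncurryFin (τ.smulRight f)).curryLeft x =
      τ x • f - alternatizeUncurryFin (τ.smulRight (f.curryLeft x)) := by
  ext v
  rw [curryLeft_apply_apply, alternatizeUncurryFin_apply, Fin.sum_univ_succ]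
  simp [alternatizeUncurryFin_apply, pow_succ, Fin.removeNth_succ_vecCons, sub_eq_add_neg]

theorem exists_linearMap_eq_one_of_span_eq_top {R M ι : Type*} [CommRing R] [AddCommGroup M]
    [Module R M] [Fintype ι] (φ : ι → M →ₗ[R] R) (x : M)
    (h : Ideal.span (Set.range fun i => φ i x) = ⊤) : ∃ τ : M →ₗ[R] R, τ x = 1 := by
  have hone : (1 : R) ∈ Ideal.span (Set.range fun i => φ i x) := h ▸ Submodule.mem_top
  obtain ⟨t, ht⟩ := (Submodule.mem_span_range_iff_exists_fun R).mp hone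
  exact ⟨∑ i, t i • φ i, by simpa using ht⟩

/-- Exactness of the Koszul complex when the coefficients of `s` generate the
unit ideal.  Here `Λ^k V*` is realized as the module of alternating `k`-forms
on the free module `V` with basis `e`, and the differential is the
contraction `ι_s = curryLeft s`.  The complex
`0 → ΛⁿV* → ⋯ → Λ¹V* → A → 0` is exact: at each `Λ^{k+1} V*` every form
killed by `ι_s` is `ι_s` of a form of one higher degree, and the last map
`Λ¹V* → A`, `f ↦ f s`, is surjective. -/
theorem koszul_complex_exact (A : Type*) [CommRing A]
    (V : Type*) [AddCommGroup V] [Module A V]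
    (n : ℕ) (e : Module.Basis (Fin n) A V)
    (c : Fin n → A) (s : V) (hs : s = ∑ i, c i • e i)
    (hunit : Ideal.span (Set.range c) = ⊤) :
    (∀ (k : ℕ) (f : V [⋀^Fin (k + 1)]→ₗ[A] A),
        f.curryLeft s = 0 →
          ∃ g : V [⋀^Fin (k + 2)]→ₗ[A] A, g.curryLeft s = f)
    ∧ ∀ a : A, ∃ f : V [⋀^Fin 1]→ₗ[A] A, f (fun _ => s) = a := by
  have hcoord : (fun i => e.coord i s) = c := by
    ext i
    rw [hs, Module.Basis.coord_apply, Module.Basis.repr_sum_self]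
  obtain ⟨τ, hτ⟩ := exists_linearMap_eq_one_of_span_eq_top e.coord s (hcoord ▸ hunit)
  refine ⟨fun k f hf => ⟨alternatizeUncurryFin (τ.smulRight f), ?_⟩,
    fun a => ⟨ofSubsingleton A V A 0 (a • τ), by simp [hτ]⟩⟩
  rw [curryLeft_alternatizeUncurryFin_smulRight, hf, hτ, LinearMap.smulRight_zero,
    ← alternatizeUncurryFinLM_apply, _root_.map_zero, one_smul, sub_zero]
end
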